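/- arXiv:1706.06770 — 7 statements merged into one kernel-verified Lean document; each statement's English description precedes it below -/
import Mathlib

section
/- Let 𝒪 be an algebra of observables on a nonempty set Ω, let P be an observable probability on the observable sets, and let X ∈ 𝒪. Then there exists a unique Borel probability measure P_X on ℝ such that P_X(U) = P(X⁻¹(U)) for every open set U ⊆ ℝ. -/
open Filter MeasureTheory Topology

variable {Ω : Type*}

/-- A family `𝒪` of real functions on `Ω` is an algebra of observables: for every `n ≥ 1`,
all `X₁, …, Xₙ ∈ 𝒪` and every `φ` continuous on the image of `(X₁, …, Xₙ)`,
the composite `ω ↦ φ (X₁ ω, …, Xₙ ω)` belongs to `𝒪`. -/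
def IsObsAlg (o : Set (Ω → ℝ)) : Prop :=
  ∀ n : ℕ, 0 < n → ∀ X : Fin n → Ω → ℝ, (∀ i, X i ∈ o) →
    ∀ φ : (Fin n → ℝ) → ℝ,
      ContinuousOn φ (Set.range fun ω => fun i => X i ω) →
      (fun ω => φ fun i => X i ω) ∈ o

/-- `F ⊆ Ω` is a zero set if `F = X⁻¹({0})` for some `X ∈ 𝒪`. -/
def IsZeroSet (o : Set (Ω → ℝ)) (F : Set Ω) : Prop :=
  ∃ X ∈ o, F = X ⁻¹' {0}

/-- A co-zero set is the complement of a zero set. -/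
def IsCozeroSet (o : Set (Ω → ℝ)) (U : Set Ω) : Prop :=
  IsZeroSet o Uᶜ

/-- The observable sets are the zero sets together with the co-zero sets. -/
def IsObsSet (o : Set (Ω → ℝ)) (A : Set Ω) : Prop :=
  IsZeroSet o A ∨ IsCozeroSet o A

/-- An observable probability: additive on disjoint observable sets with observable union,
nonnegative on observable sets, normalized, with monotone convergence along increasing
sequences of co-zero sets whose union is a co-zero set. -/
def IsObsProb (o : Set (Ω → ℝ)) (P : Set Ω → ℝ) : Prop :=
  (∀ A B : Set Ω, IsObsSet o A → IsObsSet o B → Disjoint A B →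
    IsObsSet o (A ∪ B) → P (A ∪ B) = P A + P B) ∧
  (∀ A : Set Ω, IsObsSet o A → 0 ≤ P A) ∧
  (P Set.univ = 1) ∧
  (∀ (U : ℕ → Set Ω) (V : Set Ω), (∀ i, IsCozeroSet o (U i)) → Monotone U →
    IsCozeroSet o V → (⋃ i, U i) = V →
    Tendsto (fun i => P (U i)) atTop (𝓝 (P V)))

/-- `μ` is the distribution of `X` under `P`: a Borel probability measure on `ℝ` with
`μ U = P (X ⁻¹' U)` for every open `U ⊆ ℝ`. -/
def IsDistribution (o : Set (Ω → ℝ)) (P : Set Ω → ℝ) (X : Ω → ℝ)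
    (μ : Measure ℝ) : Prop :=
  IsProbabilityMeasure μ ∧
  ∀ U : Set ℝ, IsOpen U → μ U = ENNReal.ofReal (P (X ⁻¹' U))

/-- Membership in `𝒪^∞`: a bounded member of `𝒪`. -/
def MemBdd (o : Set (Ω → ℝ)) (X : Ω → ℝ) : Prop :=
  X ∈ o ∧ ∃ M : ℝ, ∀ ω, |X ω| ≤ M

/-- The closed algebra `𝒜_X` generated by `X`: all `φ ∘ X` with `φ : ℝ → ℝ` continuous
(equivalent, by Tietze extension, to continuous functions on the closure of the image). -/
def ClosedAlg (X : Ω → ℝ) : Set (Ω → ℝ) :=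
  {Y | ∃ φ : ℝ → ℝ, Continuous φ ∧ Y = φ ∘ X}

/-- Positivity of a functional on `𝒪^∞`. -/
def PositiveFunc (o : Set (Ω → ℝ)) (E : (Ω → ℝ) → ℝ) : Prop :=
  ∀ X, MemBdd o X → (∀ ω, 0 ≤ X ω) → 0 ≤ E X

/-- Quasi-linearity: `E` is linear on each `𝒜_X`, `X ∈ 𝒪^∞`. -/
def QuasiLinear (o : Set (Ω → ℝ)) (E : (Ω → ℝ) → ℝ) : Prop :=
  ∀ X, MemBdd o X → ∀ Y ∈ ClosedAlg X, ∀ Z ∈ ClosedAlg X, ∀ a b : ℝ,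
    E (fun ω => a * Y ω + b * Z ω) = a * E Y + b * E Z

/-- `X ⪯ U` : there is a zero set `F` with `X ≤ 1_F` pointwise and `F ⊆ U`. -/
def PrecU (o : Set (Ω → ℝ)) (X : Ω → ℝ) (U : Set Ω) : Prop :=
  ∃ F : Set Ω, IsZeroSet o F ∧ (∀ ω, X ω ≤ F.indicator (fun _ => (1:ℝ)) ω) ∧ F ⊆ U

/-- An observable expectation: quasi-linear, positive, normalized, with monotone
convergence along increasing sequences in `𝒪^∞` converging pointwise in `𝒪^∞`. -/
def IsObsExp (o : Set (Ω → ℝ)) (E : (Ω → ℝ) → ℝ) : Prop :=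
  QuasiLinear o E ∧ PositiveFunc o E ∧ E (fun _ => 1) = 1 ∧
  (∀ (X : ℕ → Ω → ℝ) (Y : Ω → ℝ), (∀ n, MemBdd o (X n)) → MemBdd o Y →
    (∀ n ω, X n ω ≤ X (n+1) ω) →
    (∀ ω, Tendsto (fun n => X n ω) atTop (𝓝 (Y ω))) →
    Tendsto (fun n => E (X n)) atTop (𝓝 (E Y)))

/-- A quasi-additive probability: axioms (I)-(III) of an observable probability
together with inner regularity (IV'): `P U = sup {P F : F zero set, F ⊆ U}`. -/
def IsQuasiAddProb (o : Set (Ω → ℝ)) (P : Set Ω → ℝ) : Prop :=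
  (∀ A B : Set Ω, IsObsSet o A → IsObsSet o B → Disjoint A B →
    IsObsSet o (A ∪ B) → P (A ∪ B) = P A + P B) ∧
  (∀ A : Set Ω, IsObsSet o A → 0 ≤ P A) ∧
  (P Set.univ = 1) ∧
  (∀ U : Set Ω, IsCozeroSet o U →
    P U = sSup {r | ∃ F : Set Ω, IsZeroSet o F ∧ F ⊆ U ∧ r = P F})

/-!
The law `q A = P (X ⁻¹' A)` of `X` is an observable probability on `ℝ` for the algebra of
continuous functions, whose zero sets are exactly the closed sets. By (IV) applied to the open
sets `Ioi t`, the distribution function `t ↦ q (Iic t)` is right continuous, so it is a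
Stieltjes function; its left limits are `q (Iio t)`, and its measure agrees with `q` on open
intervals. Additivity then gives agreement on finite unions of open intervals (after merging
overlapping ones), and (IV) once more on all open sets, each being an increasing union of finite
unions of rational intervals. Uniqueness holds because finite Borel measures on `ℝ` are outer
regular.
-/

open Set Function
open scoped ENNReal

abbrev continuousObservables (α : Type*) [TopologicalSpace α] : Set (α → ℝ) :=
  {f | Continuous f}

theorem IsObsSet.compl {o : Set (Ω → ℝ)} {A : Set Ω} (hA : IsObsSet o A) :
    IsObsSet o Aᶜ := by
  unfold IsObsSet IsCozeroSet
  rwa [compl_compl, or_comm]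

namespace IsObsProb

variable {o : Set (Ω → ℝ)} {P : Set Ω → ℝ} {A B : Set Ω}

theorem empty (hP : IsObsProb o P) (h : IsObsSet o ∅) : P ∅ = 0 := by
  have hadd := hP.1 ∅ ∅ h h (disjoint_empty _) (by rwa [union_self])
  rw [union_self] at hadd
  linarith

theorem mono (hP : IsObsProb o P) (hA : IsObsSet o A) (hBA : IsObsSet o (B \ A))
    (hB : IsObsSet o B) (h : A ⊆ B) : P A ≤ P B := by
  have hadd := hP.1 A (B \ A) hA hBA disjoint_sdiff_right (by rwa [union_sdiff_cancel h])
  rw [union_sdiff_cancel h] at hadd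
  linarith [hP.2.1 _ hBA]

theorem compl (hP : IsObsProb o P) (hA : IsObsSet o A) (huniv : IsObsSet o univ) :
    P Aᶜ = 1 - P A := by
  have hadd := hP.1 A Aᶜ hA hA.compl disjoint_compl_right (by rwa [union_compl_self])
  rw [union_compl_self, hP.2.2.1] at hadd
  linarith

end IsObsProb

section ContinuousObservables

variable {α : Type*} [PseudoMetricSpace α]

theorem IsClosed.isZeroSet_continuousObservables {C : Set α} (hC : IsClosed C) :
    IsZeroSet (continuousObservables α) C := by
  rcases C.eq_empty_or_nonempty with rfl | hne
  · exact ⟨fun _ => 1, continuous_const, by simp⟩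
  · exact ⟨fun x => Metric.infDist x C, Metric.continuous_infDist_pt C,
      by ext x; exact hC.mem_iff_infDist_zero hne⟩

theorem IsClosed.isObsSet_continuousObservables {C : Set α} (hC : IsClosed C) :
    IsObsSet (continuousObservables α) C :=
  Or.inl hC.isZeroSet_continuousObservables

theorem IsOpen.isObsSet_continuousObservables {U : Set α} (hU : IsOpen U) :
    IsObsSet (continuousObservables α) U :=
  Or.inr hU.isClosed_compl.isZeroSet_continuousObservables

namespace IsObsProb

variable {q : Set α → ℝ}

theorem le_of_isClosed_of_isOpen (hq : IsObsProb (continuousObservables α) q) {C U : Set α}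
    (hC : IsClosed C) (hU : IsOpen U) (h : C ⊆ U) : q C ≤ q U :=
  hq.mono hC.isObsSet_continuousObservables
    (hU.sdiff hC).isObsSet_continuousObservables hU.isObsSet_continuousObservables h

theorem le_of_isOpen_of_isClosed (hq : IsObsProb (continuousObservables α) q) {U C : Set α}
    (hU : IsOpen U) (hC : IsClosed C) (h : U ⊆ C) : q U ≤ q C :=
  hq.mono hU.isObsSet_continuousObservables
    (hC.sdiff hU).isObsSet_continuousObservables hC.isObsSet_continuousObservables h

theorem add_of_isOpen (hq : IsObsProb (continuousObservables α) q) {U V : Set α}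
    (hU : IsOpen U) (hV : IsOpen V) (hUV : Disjoint U V) : q (U ∪ V) = q U + q V :=
  hq.1 U V hU.isObsSet_continuousObservables hV.isObsSet_continuousObservables hUV
    (hU.union hV).isObsSet_continuousObservables

theorem tendsto_iUnion (hq : IsObsProb (continuousObservables α) q) {U : ℕ → Set α}
    (hU : ∀ n, IsOpen (U n)) (hmono : Monotone U) :
    Tendsto (fun n => q (U n)) atTop (𝓝 (q (⋃ n, U n))) :=
  hq.2.2.2 U _ (fun n => (hU n).isClosed_compl.isZeroSet_continuousObservables) hmono
    (isOpen_iUnion hU).isClosed_compl.isZeroSet_continuousObservables rfl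

end IsObsProb

end ContinuousObservables

theorem IsObsAlg.comp_mem {o : Set (Ω → ℝ)} (hO : IsObsAlg o) {X : Ω → ℝ} (hX : X ∈ o)
    {φ : ℝ → ℝ} (hφ : Continuous φ) : φ ∘ X ∈ o :=
  hO 1 one_pos (fun _ => X) (fun _ => hX) (fun v => φ (v 0))
    (hφ.comp (continuous_apply 0)).continuousOn

section Law

variable {o : Set (Ω → ℝ)} {X : Ω → ℝ} {A : Set ℝ}

theorem IsZeroSet.preimage (hO : IsObsAlg o) (hX : X ∈ o)
    (hA : IsZeroSet (continuousObservables ℝ) A) : IsZeroSet o (X ⁻¹' A) := by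
  obtain ⟨φ, hφ, rfl⟩ := hA
  exact ⟨φ ∘ X, hO.comp_mem hX hφ, rfl⟩

theorem IsObsSet.preimage (hO : IsObsAlg o) (hX : X ∈ o)
    (hA : IsObsSet (continuousObservables ℝ) A) : IsObsSet o (X ⁻¹' A) :=
  hA.imp (·.preimage hO hX) (·.preimage hO hX)

theorem IsObsProb.map (hO : IsObsAlg o) (hX : X ∈ o) {P : Set Ω → ℝ} (hP : IsObsProb o P) :
    IsObsProb (continuousObservables ℝ) fun A => P (X ⁻¹' A) := by
  obtain ⟨hadd, hnonneg, huniv, htendsto⟩ := hP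
  refine ⟨fun A B hA hB hAB hAB' => hadd _ _ (hA.preimage hO hX) (hB.preimage hO hX)
      (hAB.preimage X) (hAB'.preimage hO hX),
    fun A hA => hnonneg _ (hA.preimage hO hX), huniv, fun U V hU hmono hV hUV => ?_⟩
  exact htendsto _ _ (fun n => (hU n).preimage hO hX) (fun m n h => preimage_mono (hmono h))
    (hV.preimage hO hX) (by rw [← preimage_iUnion, hUV])

end Law

section IntervalUnions

variable {m q : Set ℝ → ℝ≥0∞}

theorem eq_biUnion_Ioo_of_eq_Ioo
    (hm : ∀ U V, IsOpen U → IsOpen V → Disjoint U V → m (U ∪ V) = m U + m V)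
    (hq : ∀ U V, IsOpen U → IsOpen V → Disjoint U V → q (U ∪ V) = q U + q V)
    (h : ∀ a b, m (Ioo a b) = q (Ioo a b)) (s : Finset (ℝ × ℝ)) :
    m (⋃ c ∈ s, Ioo c.1 c.2) = q (⋃ c ∈ s, Ioo c.1 c.2) := by
  classical
  induction hn : s.card using Nat.strong_induction_on generalizing s with
  | _ n ih =>
  rcases s.eq_empty_or_nonempty with rfl | ⟨c, hc⟩
  · simpa using h 0 0
  have hcard : (s.erase c).card < n := hn ▸ Finset.card_erase_lt_of_mem hc
  rw [← Finset.insert_erase hc, Finset.set_biUnion_insert]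
  by_cases hdisj : Disjoint (Ioo c.1 c.2) (⋃ d ∈ s.erase c, Ioo d.1 d.2)
  · have hV : IsOpen (⋃ d ∈ s.erase c, Ioo d.1 d.2) := isOpen_biUnion fun _ _ => isOpen_Ioo
    rw [hm _ _ isOpen_Ioo hV hdisj, hq _ _ isOpen_Ioo hV hdisj, h, ih _ hcard _ rfl]
  -- merging two overlapping intervals lowers the number of intervals
  obtain ⟨d, hd, hcd⟩ : ∃ d ∈ s.erase c, ¬Disjoint (Ioo c.1 c.2) (Ioo d.1 d.2) := by
    simpa only [disjoint_iUnion_right, not_forall, exists_prop] using hdisj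
  obtain ⟨x, hxc, hxd⟩ := not_disjoint_iff.1 hcd
  set t := (s.erase c).erase d
  have hmerge : Ioo c.1 c.2 ∪ ⋃ e ∈ s.erase c, Ioo e.1 e.2
      = ⋃ e ∈ insert (min c.1 d.1, max c.2 d.2) t, Ioo e.1 e.2 := by
    rw [← Finset.insert_erase hd, Finset.set_biUnion_insert, Finset.set_biUnion_insert,
      ← union_assoc, Ioo_union_Ioo' (hxd.1.trans hxc.2) (hxc.1.trans hxd.2)]
  have hcard' : (insert (min c.1 d.1, max c.2 d.2) t).card < n :=
    (Finset.card_insert_le _ _).trans_lt (by rwa [Finset.card_erase_add_one hd])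
  rw [hmerge]
  exact ih _ hcard' _ rfl

theorem IsOpen.exists_iUnion_Ioo {U : Set ℝ} (hU : IsOpen U) :
    ∃ p : ℕ → ℝ × ℝ, ⋃ n, Ioo (p n).1 (p n).2 = U := by
  classical
  let r : ℚ × ℚ → ℝ × ℝ := fun c => if Ioo (c.1 : ℝ) c.2 ⊆ U then (c.1, c.2) else (0, 0)
  obtain ⟨e, he⟩ := exists_surjective_nat (ℚ × ℚ)
  refine ⟨fun n => r (e n), ?_⟩
  rw [he.iUnion_comp fun c => Ioo (r c).1 (r c).2]
  refine Subset.antisymm (iUnion_subset fun c => ?_) fun x hx => ?_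
  · by_cases hc : Ioo (c.1 : ℝ) c.2 ⊆ U <;> simp [r, hc]
  · obtain ⟨v, hv, hxv, hvU⟩ := Real.isTopologicalBasis_Ioo_rat.exists_subset_of_mem_open hx hU
    simp only [mem_iUnion, mem_singleton_iff] at hv
    obtain ⟨a, b, -, rfl⟩ := hv
    exact mem_iUnion.2 ⟨(a, b), by simp [r, hvU, hxv]⟩

theorem eq_of_isOpen_of_eq_Ioo
    (hm : ∀ U V, IsOpen U → IsOpen V → Disjoint U V → m (U ∪ V) = m U + m V)
    (hq : ∀ U V, IsOpen U → IsOpen V → Disjoint U V → q (U ∪ V) = q U + q V)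
    (hm_iUnion : ∀ U : ℕ → Set ℝ, (∀ n, IsOpen (U n)) → Monotone U →
      Tendsto (fun n => m (U n)) atTop (𝓝 (m (⋃ n, U n))))
    (hq_iUnion : ∀ U : ℕ → Set ℝ, (∀ n, IsOpen (U n)) → Monotone U →
      Tendsto (fun n => q (U n)) atTop (𝓝 (q (⋃ n, U n))))
    (h : ∀ a b, m (Ioo a b) = q (Ioo a b)) {U : Set ℝ} (hU : IsOpen U) : m U = q U := by
  obtain ⟨p, rfl⟩ := hU.exists_iUnion_Ioo
  let W : ℕ → Set ℝ := fun n => ⋃ c ∈ (Finset.range n).image p, Ioo c.1 c.2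
  have hW_open (n : ℕ) : IsOpen (W n) := isOpen_biUnion fun _ _ => isOpen_Ioo
  have hW_mono : Monotone W := fun i j hij =>
    biUnion_subset_biUnion_left (Finset.image_subset_image (Finset.range_mono hij))
  have hW : ⋃ n, W n = ⋃ n, Ioo (p n).1 (p n).2 := by
    ext x
    simp only [W, mem_iUnion, Finset.mem_image, Finset.mem_range, exists_prop]
    constructor
    · rintro ⟨n, c, ⟨k, -, rfl⟩, hx⟩
      exact ⟨k, hx⟩
    · rintro ⟨k, hx⟩
      exact ⟨k + 1, p k, ⟨k, k.lt_succ_self, rfl⟩, hx⟩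
  rw [← hW]
  refine tendsto_nhds_unique (hm_iUnion W hW_open hW_mono) ?_
  simpa only [W, eq_biUnion_Ioo_of_eq_Ioo hm hq h] using hq_iUnion W hW_open hW_mono

end IntervalUnions

namespace IsObsProb

variable {q : Set ℝ → ℝ}

theorem Iic_eq_one_sub_Ioi (hq : IsObsProb (continuousObservables ℝ) q) (t : ℝ) :
    q (Iic t) = 1 - q (Ioi t) := by
  rw [← compl_Ioi, hq.compl isOpen_Ioi.isObsSet_continuousObservables
    isClosed_univ.isObsSet_continuousObservables]

theorem monotone_Iic (hq : IsObsProb (continuousObservables ℝ) q) :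
    Monotone fun t => q (Iic t) := by
  intro s t hst
  rcases hst.eq_or_lt with rfl | hlt
  · rfl
  exact (hq.le_of_isClosed_of_isOpen isClosed_Iic isOpen_Iio (Iic_subset_Iio.2 hlt)).trans
    (hq.le_of_isOpen_of_isClosed isOpen_Iio isClosed_Iic Iio_subset_Iic_self)

theorem continuousWithinAt_Iic (hq : IsObsProb (continuousObservables ℝ) q) (x : ℝ) :
    ContinuousWithinAt (fun t => q (Iic t)) (Ici x) x := by
  obtain ⟨u, hu_anti, hxu, hu⟩ := exists_seq_strictAnti_tendsto x
  have hIoi : Tendsto (fun n => q (Ioi (u n))) atTop (𝓝 (q (Ioi x))) := by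
    rw [← (isGLB_of_tendsto_atTop hu_anti.antitone hu).iUnion_Ioi_eq]
    exact hq.tendsto_iUnion (fun _ => isOpen_Ioi) fun m n h => Ioi_subset_Ioi (hu_anti.antitone h)
  have hIic : Tendsto (fun n => q (Iic (u n))) atTop (𝓝 (q (Iic x))) := by
    simpa only [hq.Iic_eq_one_sub_Ioi] using hIoi.const_sub 1
  rw [← continuousWithinAt_Ioi_iff_Ici, hq.monotone_Iic.continuousWithinAt_Ioi_iff_rightLim_eq]
  exact tendsto_nhds_unique ((hq.monotone_Iic.tendsto_rightLim x).comp
    (tendsto_nhdsWithin_iff.2 ⟨hu, .of_forall hxu⟩)) hIic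

def stieltjes (hq : IsObsProb (continuousObservables ℝ) q) : StieltjesFunction ℝ :=
  ⟨fun t => q (Iic t), hq.monotone_Iic, hq.continuousWithinAt_Iic⟩

theorem leftLim_stieltjes (hq : IsObsProb (continuousObservables ℝ) q) (b : ℝ) :
    leftLim hq.stieltjes b = q (Iio b) := by
  obtain ⟨u, hu_mono, hub, hu⟩ := exists_seq_strictMono_tendsto b
  have hIio : Tendsto (fun n => q (Iio (u n))) atTop (𝓝 (q (Iio b))) := by
    rw [← (isLUB_of_tendsto_atTop hu_mono.monotone hu).iUnion_Iio_eq]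
    exact hq.tendsto_iUnion (fun _ => isOpen_Iio) fun m n h => Iio_subset_Iio (hu_mono.monotone h)
  have hIic : Tendsto (fun n => q (Iic (u n))) atTop (𝓝 (q (Iio b))) :=
    tendsto_of_tendsto_of_tendsto_of_le_of_le hIio tendsto_const_nhds
      (fun n => hq.le_of_isOpen_of_isClosed isOpen_Iio isClosed_Iic Iio_subset_Iic_self)
      (fun n => hq.le_of_isClosed_of_isOpen isClosed_Iic isOpen_Iio (Iic_subset_Iio.2 (hub n)))
  exact tendsto_nhds_unique ((hq.stieltjes.mono.tendsto_leftLim b).comp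
    (tendsto_nhdsWithin_iff.2 ⟨hu, .of_forall hub⟩)) hIic

theorem measure_stieltjes_Ioo (hq : IsObsProb (continuousObservables ℝ) q) (a b : ℝ) :
    hq.stieltjes.measure (Ioo a b) = ENNReal.ofReal (q (Ioo a b)) := by
  rw [StieltjesFunction.measure_Ioo, leftLim_stieltjes]
  rcases lt_or_ge a b with hab | hba
  · have hadd := hq.1 _ _ isClosed_Iic.isObsSet_continuousObservables
      isOpen_Ioo.isObsSet_continuousObservables
      (disjoint_left.2 fun x hxa hxb => not_lt.2 hxa hxb.1)
      (by rw [Iic_union_Ioo_eq_Iio hab]; exact isOpen_Iio.isObsSet_continuousObservables)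
    rw [Iic_union_Ioo_eq_Iio hab] at hadd
    change ENNReal.ofReal (q (Iio b) - q (Iic a)) = _
    rw [hadd, add_sub_cancel_left]
  · rw [Ioo_eq_empty (not_lt.2 hba), hq.empty isClosed_empty.isObsSet_continuousObservables,
      ENNReal.ofReal_zero, ENNReal.ofReal_eq_zero, sub_nonpos]
    exact hq.le_of_isOpen_of_isClosed isOpen_Iio isClosed_Iic (Iio_subset_Iic hba)

theorem measure_stieltjes_of_isOpen (hq : IsObsProb (continuousObservables ℝ) q)
    {U : Set ℝ} (hU : IsOpen U) : hq.stieltjes.measure U = ENNReal.ofReal (q U) := by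
  refine eq_of_isOpen_of_eq_Ioo (q := fun U => ENNReal.ofReal (q U))
    (fun U V _ hV hUV => measure_union hUV hV.measurableSet) (fun U V hU hV hUV => ?_)
    (fun U _ hmono => tendsto_measure_iUnion_atTop hmono)
    (fun U hU hmono => (ENNReal.continuous_ofReal.tendsto _).comp (hq.tendsto_iUnion hU hmono))
    hq.measure_stieltjes_Ioo hU
  rw [hq.add_of_isOpen hU hV hUV, ENNReal.ofReal_add (hq.2.1 _ hU.isObsSet_continuousObservables)
    (hq.2.1 _ hV.isObsSet_continuousObservables)]

theorem existsUnique_measure (hq : IsObsProb (continuousObservables ℝ) q) :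
    ∃! μ : Measure ℝ, IsProbabilityMeasure μ ∧
      ∀ U : Set ℝ, IsOpen U → μ U = ENNReal.ofReal (q U) := by
  have hprob : IsProbabilityMeasure hq.stieltjes.measure :=
    ⟨by rw [hq.measure_stieltjes_of_isOpen isOpen_univ, hq.2.2.1, ENNReal.ofReal_one]⟩
  refine ⟨hq.stieltjes.measure, ⟨hprob, fun U => hq.measure_stieltjes_of_isOpen⟩, ?_⟩
  rintro ν ⟨hν, hνU⟩
  exact Measure.OuterRegular.ext_isOpen fun U hU =>
    (hνU U hU).trans (hq.measure_stieltjes_of_isOpen hU).symm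

end IsObsProb

theorem existsUnique_distribution_general {Ω : Type*}
    (o : Set (Ω → ℝ)) (hO : IsObsAlg o) (P : Set Ω → ℝ) (hP : IsObsProb o P)
    (X : Ω → ℝ) (hX : X ∈ o) :
    ∃! μ : Measure ℝ, IsDistribution o P X μ :=
  (hP.map hO hX).existsUnique_measure

/-- every observable has a unique distribution: a Borel probability
measure `μ` on `ℝ` with `μ U = P (X ⁻¹' U)` for all open `U`. -/
theorem existsUnique_distribution {Ω : Type*} [Nonempty Ω]
    (o : Set (Ω → ℝ)) (hO : IsObsAlg o) (P : Set Ω → ℝ) (hP : IsObsProb o P)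
    (X : Ω → ℝ) (hX : X ∈ o) :
    ∃! μ : Measure ℝ, IsDistribution o P X μ :=
  existsUnique_distribution_general o hO P hP X hX
end

section
/- Let 𝒪 be an algebra of observables on a nonempty set Ω, P an observable probability, X ∈ 𝒪, and φ : ℝ → ℝ continuous (so that φ ∘ X ∈ 𝒪). Then the distribution of φ ∘ X is the pushforward of the distribution of X under φ: P_{φ∘X}(B) = P_X(φ⁻¹(B)) for every Borel set B ⊆ ℝ. -/
open Filter MeasureTheory Topology

variable {Ω : Type*}

/-- the distribution of `φ ∘ X` is the pushforward of the distribution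
of `X` under `φ`, on every Borel set. -/
theorem distribution_comp {Ω : Type*} [Nonempty Ω]
    (o : Set (Ω → ℝ)) (hO : IsObsAlg o) (P : Set Ω → ℝ) (hP : IsObsProb o P)
    (X : Ω → ℝ) (hX : X ∈ o) (φ : ℝ → ℝ) (hφ : Continuous φ)
    (μ ν : Measure ℝ) (hμ : IsDistribution o P X μ)
    (hν : IsDistribution o P (φ ∘ X) ν) :
    ∀ B : Set ℝ, MeasurableSet B → ν B = μ (φ ⁻¹' B) := by
  have hprobμ : IsProbabilityMeasure μ := hμ.1
  have hprobν : IsProbabilityMeasure ν := hν.1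
  have hmeas : Measurable φ := hφ.measurable
  have hprobm : IsProbabilityMeasure (μ.map φ) :=
    Measure.isProbabilityMeasure_map hmeas.aemeasurable
  have heq : ν = μ.map φ := by
    refine MeasureTheory.ext_of_generate_finite {s : Set ℝ | IsOpen s} ?_ ?_ ?_ ?_
    · exact BorelSpace.measurable_eq.trans rfl
    · intro s hs t ht _
      simp only [Set.mem_setOf_eq] at hs ht
      exact hs.inter ht
    · intro U hU
      simp only [Set.mem_setOf_eq] at hU
      rw [Measure.map_apply hmeas hU.measurableSet, hν.2 U hU,
        hμ.2 _ (hU.preimage hφ)]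
      rfl
    · simp
  intro B hB
  rw [heq, Measure.map_apply hmeas hB]
end

section
/- Let 𝒪 be an algebra of observables on a nonempty set Ω, P an observable probability, X ∈ 𝒪, and φ : ℝ → ℝ continuous (so that φ ∘ X ∈ 𝒪). If φ ∘ X is integrable with respect to P, then ∫ (φ ∘ X) dP = ∫ φ(t) P_X(dt), where P_X is the distribution of X. -/
open Filter MeasureTheory Topology

variable {Ω : Type*}

/-- if `φ ∘ X` is integrable with respect to `P`, then
`∫ (φ ∘ X) dP = ∫ φ(t) P_X(dt)`. -/
theorem integral_comp {Ω : Type*} [Nonempty Ω]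
    (o : Set (Ω → ℝ)) (hO : IsObsAlg o) (P : Set Ω → ℝ) (hP : IsObsProb o P)
    (X : Ω → ℝ) (hX : X ∈ o) (φ : ℝ → ℝ) (hφ : Continuous φ)
    (μ ν : Measure ℝ) (hμ : IsDistribution o P X μ)
    (hν : IsDistribution o P (φ ∘ X) ν)
    (hint : Integrable id ν) :
    (∫ t, t ∂ν) = ∫ t, φ t ∂μ := by
  obtain ⟨hμprob, hμopen⟩ := hμ
  obtain ⟨hνprob, hνopen⟩ := hν
  have hmap : ν = μ.map φ := by
    refine MeasureTheory.ext_of_generate_finite {s : Set ℝ | IsOpen s} ?_ ?_ ?_ ?_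
    · exact BorelSpace.measurable_eq
    · intro s hs t ht _
      simp only [Set.mem_setOf_eq] at hs ht
      exact hs.inter ht
    · intro s hs
      rw [Measure.map_apply hφ.measurable (IsOpen.measurableSet hs), hνopen s hs,
        hμopen _ (hs.preimage hφ)]
      rfl
    · have : IsProbabilityMeasure (μ.map φ) := Measure.isProbabilityMeasure_map
        hφ.measurable.aemeasurable
      simp [measure_univ]
  rw [hmap]
  exact MeasureTheory.integral_map hφ.measurable.aemeasurable
    aestronglyMeasurable_id
end

section
/- Let 𝒪 be an algebra of observables on a nonempty set Ω, P an observable probability, and X ∈ 𝒪 integrable with X(ω) ≥ α for all ω ∈ Ω. Then ∫ X dP = α + ∫_α^∞ P(X⁻¹((t, ∞))) dt = α + ∫_α^∞ P(X⁻¹([t, ∞))) dt, where the integrals over (α, ∞) are Lebesgue integrals (the sets X⁻¹((t,∞)) are co-zero sets and the sets X⁻¹([t,∞)) are zero sets, so P is defined on them). -/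
open Filter MeasureTheory Topology

variable {Ω : Type*}

/-!
Because `𝒪` is closed under continuous functions, `X⁻¹(C)` is a zero set for every closed
`C ⊆ ℝ` (it is the zero set of the distance to `C`), and `X⁻¹(U)` a co-zero set for every open
`U`. On these sets `P` agrees with the distribution `P_X`: on open sets by definition, on closed
ones because `P(X⁻¹C) + P(X⁻¹Cᶜ) = P(Ω) = 1`. In particular `P_X` is concentrated on `[α, ∞)`,
and both formulas are the layer-cake formula for `P_X` applied to the nonnegative `t ↦ t - α`.
-/

open Set

namespace IsObsAlg

variable {o : Set (Ω → ℝ)} {X : Ω → ℝ}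

theorem comp_mem_s6 (hO : IsObsAlg o) (hX : X ∈ o) {φ : ℝ → ℝ} (hφ : Continuous φ) :
    φ ∘ X ∈ o := by
  simpa [Function.comp_def] using hO 1 one_pos (fun _ => X) (fun _ => hX) (fun v => φ (v 0))
    (hφ.comp (continuous_apply 0)).continuousOn

theorem isZeroSet_preimage (hO : IsObsAlg o) (hX : X ∈ o) {C : Set ℝ} (hC : IsClosed C) :
    IsZeroSet o (X ⁻¹' C) := by
  -- `infDist x ∅ = 0`, so the distance function only works for nonempty `C`
  rcases C.eq_empty_or_nonempty with rfl | hne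
  · exact ⟨_, hO.comp_mem_s6 hX (continuous_const (y := (1 : ℝ))), by ext; simp⟩
  · refine ⟨_, hO.comp_mem_s6 hX (Metric.continuous_infDist_pt C), ?_⟩
    ext ω
    simp [hC.mem_iff_infDist_zero hne]

theorem isCozeroSet_preimage (hO : IsObsAlg o) (hX : X ∈ o) {U : Set ℝ} (hU : IsOpen U) :
    IsCozeroSet o (X ⁻¹' U) := by
  simpa [IsCozeroSet] using hO.isZeroSet_preimage hX hU.isClosed_compl

end IsObsAlg

namespace IsDistribution

variable {o : Set (Ω → ℝ)} {P : Set Ω → ℝ} {X : Ω → ℝ} {μ : Measure ℝ}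

theorem measureReal_of_isOpen (hμ : IsDistribution o P X μ) (hO : IsObsAlg o)
    (hP : IsObsProb o P) (hX : X ∈ o) {U : Set ℝ} (hU : IsOpen U) :
    μ.real U = P (X ⁻¹' U) := by
  rw [measureReal_def, hμ.2 U hU,
    ENNReal.toReal_ofReal (hP.2.1 _ (Or.inr (hO.isCozeroSet_preimage hX hU)))]

theorem measureReal_of_isClosed (hμ : IsDistribution o P X μ) (hO : IsObsAlg o)
    (hP : IsObsProb o P) (hX : X ∈ o) {C : Set ℝ} (hC : IsClosed C) :
    μ.real C = P (X ⁻¹' C) := by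
  have := hμ.1
  have hZ := hO.isZeroSet_preimage hX hC
  have hU := hO.isCozeroSet_preimage hX hC.isOpen_compl
  have hP_add : P (X ⁻¹' C) + P (X ⁻¹' Cᶜ) = 1 := by
    rw [← hP.2.2.1, ← hP.1 _ _ (Or.inl hZ) (Or.inr hU), preimage_compl, union_compl_self]
    · exact disjoint_compl_right
    · exact Or.inl (by simpa using hO.isZeroSet_preimage hX isClosed_univ)
  have hμ_add := measureReal_add_measureReal_compl (μ := μ) hC.measurableSet
  rw [probReal_univ, hμ.measureReal_of_isOpen hO hP hX hC.isOpen_compl] at hμ_add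
  linarith

theorem ae_le (hμ : IsDistribution o P X μ) (hO : IsObsAlg o) (hP : IsObsProb o P)
    (hX : X ∈ o) {α : ℝ} (hα : ∀ ω, α ≤ X ω) : ∀ᵐ t ∂μ, α ≤ t := by
  have := hμ.1
  have hfull : μ.real (Ici α) = 1 := by
    rw [hμ.measureReal_of_isClosed hO hP hX isClosed_Ici, preimage_eq_univ_iff.2, hP.2.2.1]
    rintro _ ⟨ω, rfl⟩
    exact hα ω
  have hnull : μ.real (Ici α)ᶜ = 0 := by
    rw [probReal_compl_eq_one_sub measurableSet_Ici, hfull, sub_self]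
  rw [ae_iff]
  exact (measureReal_eq_zero_iff).1 hnull

end IsDistribution

theorem setIntegral_Ioi_zero_comp_add_right (g : ℝ → ℝ) (α : ℝ) :
    ∫ x in Ioi (0 : ℝ), g (x + α) = ∫ x in Ioi α, g x := by
  simpa using (measurePreserving_add_right volume α).setIntegral_preimage_emb
    (measurableEmbedding_addRight α) g (Ioi α)

section LayerCake

variable {μ : Measure ℝ} [IsProbabilityMeasure μ] {α : ℝ}

theorem integral_id_eq_add_integral_sub (hint : Integrable id μ) (α : ℝ) :
    ∫ t, t ∂μ = α + ∫ t, (t - α) ∂μ := by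
  rw [integral_sub (f := fun t => t) hint (integrable_const α)]
  simp

theorem integral_id_eq_add_integral_measureReal_Ioi (hint : Integrable id μ)
    (hα : ∀ᵐ t ∂μ, α ≤ t) : ∫ t, t ∂μ = α + ∫ t in Ioi α, μ.real (Ioi t) := by
  have hint' : Integrable (fun t => t - α) μ := hint.sub (integrable_const α)
  have hnn : 0 ≤ᵐ[μ] fun t => t - α := hα.mono fun t ht => sub_nonneg.2 ht
  rw [integral_id_eq_add_integral_sub hint α, hint'.integral_eq_integral_meas_lt hnn,
    ← setIntegral_Ioi_zero_comp_add_right fun t => μ.real (Ioi t)]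
  simp_rw [lt_sub_iff_add_lt]
  rfl

theorem integral_id_eq_add_integral_measureReal_Ici (hint : Integrable id μ)
    (hα : ∀ᵐ t ∂μ, α ≤ t) : ∫ t, t ∂μ = α + ∫ t in Ioi α, μ.real (Ici t) := by
  have hint' : Integrable (fun t => t - α) μ := hint.sub (integrable_const α)
  have hnn : 0 ≤ᵐ[μ] fun t => t - α := hα.mono fun t ht => sub_nonneg.2 ht
  rw [integral_id_eq_add_integral_sub hint α, hint'.integral_eq_integral_meas_le hnn,
    ← setIntegral_Ioi_zero_comp_add_right fun t => μ.real (Ici t)]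
  simp_rw [le_sub_iff_add_le]
  rfl

end LayerCake

theorem integral_eq_layer_cake_general {Ω : Type*}
    (o : Set (Ω → ℝ)) (hO : IsObsAlg o) (P : Set Ω → ℝ) (hP : IsObsProb o P)
    (X : Ω → ℝ) (hX : X ∈ o) (α : ℝ) (hα : ∀ ω, α ≤ X ω)
    (μ : Measure ℝ) (hμ : IsDistribution o P X μ) (hint : Integrable id μ) :
    (∫ t, t ∂μ) = α + ∫ t in Set.Ioi α, P (X ⁻¹' Set.Ioi t) ∧
    (∫ t, t ∂μ) = α + ∫ t in Set.Ioi α, P (X ⁻¹' Set.Ici t) := by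
  have := hμ.1
  have hge := hμ.ae_le hO hP hX hα
  have hIoi : (fun t => P (X ⁻¹' Ioi t)) = fun t => μ.real (Ioi t) :=
    funext fun t => (hμ.measureReal_of_isOpen hO hP hX isOpen_Ioi).symm
  have hIci : (fun t => P (X ⁻¹' Ici t)) = fun t => μ.real (Ici t) :=
    funext fun t => (hμ.measureReal_of_isClosed hO hP hX isClosed_Ici).symm
  rw [hIoi, hIci]
  exact ⟨integral_id_eq_add_integral_measureReal_Ioi hint hge,
    integral_id_eq_add_integral_measureReal_Ici hint hge⟩

/-- for an integrable observable `X ≥ α`,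
`∫ X dP = α + ∫_α^∞ P(X > t) dt = α + ∫_α^∞ P(X ≥ t) dt`. -/
theorem integral_eq_layer_cake {Ω : Type*} [Nonempty Ω]
    (o : Set (Ω → ℝ)) (hO : IsObsAlg o) (P : Set Ω → ℝ) (hP : IsObsProb o P)
    (X : Ω → ℝ) (hX : X ∈ o) (α : ℝ) (hα : ∀ ω, α ≤ X ω)
    (μ : Measure ℝ) (hμ : IsDistribution o P X μ) (hint : Integrable id μ) :
    (∫ t, t ∂μ) = α + ∫ t in Set.Ioi α, P (X ⁻¹' Set.Ioi t) ∧
    (∫ t, t ∂μ) = α + ∫ t in Set.Ioi α, P (X ⁻¹' Set.Ici t) :=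
  integral_eq_layer_cake_general o hO P hP X hX α hα μ hμ hint
end

section
/- Let 𝒪 be an algebra of observables on a nonempty set Ω and P an observable probability. Let Xₙ ∈ 𝒪 with X₁(ω) ≥ α for all ω, Xₙ ≤ Xₙ₊₁ pointwise, and Xₙ → X pointwise with X ∈ 𝒪 integrable. Then each Xₙ is integrable and ∫ Xₙ dP increases to ∫ X dP. -/
/-!
The distribution of an observable `Y` is read off its tails `μ (c, ∞) = P {Y > c}`. For
`Xₙ ↑ X` the sets `{Xₙ > c}` are co-zero sets increasing to `{X > c}`, so axiom (IV) and the
monotonicity of `P` on co-zero sets make every tail of `μₙ` increase to the tail of `μ`.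
All distributions live on `[α, ∞)`, where `∫ t dν = α + ∫₀^∞ ν (α + s, ∞) ds`, and the
monotone convergence theorem for this Lebesgue integral gives the claim.
-/

open Filter MeasureTheory Topology

variable {Ω : Type*}

open Set
open scoped ENNReal

namespace IsObsAlg

variable {o : Set (Ω → ℝ)}

theorem comp_mem_s7 (hO : IsObsAlg o) {f : Ω → ℝ} (hf : f ∈ o) {φ : ℝ → ℝ} (hφ : Continuous φ) :
    (fun ω => φ (f ω)) ∈ o := by
  simpa using hO 1 one_pos (fun _ => f) (fun _ => hf) (fun v => φ (v 0))
    (hφ.comp (continuous_apply 0)).continuousOn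

theorem comp₂_mem (hO : IsObsAlg o) {f g : Ω → ℝ} (hf : f ∈ o) (hg : g ∈ o)
    {φ : ℝ → ℝ → ℝ} (hφ : Continuous (Function.uncurry φ)) : (fun ω => φ (f ω) (g ω)) ∈ o := by
  simpa using hO 2 two_pos ![f, g] (by simp [Fin.forall_fin_two, hf, hg]) (fun v => φ (v 0) (v 1))
    (hφ.comp (by fun_prop : Continuous fun v : Fin 2 → ℝ => (v 0, v 1))).continuousOn

theorem isZeroSet_empty (hO : IsObsAlg o) {f : Ω → ℝ} (hf : f ∈ o) : IsZeroSet o ∅ :=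
  ⟨_, hO.comp_mem_s7 hf (continuous_const (y := 1)), by simp⟩

theorem isZeroSet_union (hO : IsObsAlg o) {F G : Set Ω} (hF : IsZeroSet o F)
    (hG : IsZeroSet o G) : IsZeroSet o (F ∪ G) := by
  obtain ⟨f, hf, rfl⟩ := hF
  obtain ⟨g, hg, rfl⟩ := hG
  exact ⟨_, hO.comp₂_mem hf hg continuous_mul, by ext; simp⟩

theorem isCozeroSet_inter (hO : IsObsAlg o) {U V : Set Ω} (hU : IsCozeroSet o U)
    (hV : IsCozeroSet o V) : IsCozeroSet o (U ∩ V) := by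
  rw [IsCozeroSet, compl_inter]
  exact hO.isZeroSet_union hU hV

theorem isZeroSet_preimage_singleton (hO : IsObsAlg o) {f : Ω → ℝ} (hf : f ∈ o) (c : ℝ) :
    IsZeroSet o (f ⁻¹' {c}) :=
  ⟨_, hO.comp_mem_s7 hf (continuous_sub_right c), by ext; simp [sub_eq_zero]⟩

theorem isZeroSet_preimage_Ici (hO : IsObsAlg o) {f : Ω → ℝ} (hf : f ∈ o) (c : ℝ) :
    IsZeroSet o (f ⁻¹' Ici c) :=
  ⟨_, hO.comp_mem_s7 hf (φ := fun x => max (c - x) 0) (by fun_prop), by ext; simp⟩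

theorem isCozeroSet_preimage_Ioi (hO : IsObsAlg o) {f : Ω → ℝ} (hf : f ∈ o) (c : ℝ) :
    IsCozeroSet o (f ⁻¹' Ioi c) :=
  ⟨_, hO.comp_mem_s7 hf (φ := fun x => max (x - c) 0) (by fun_prop), by ext; simp⟩

theorem exists_preimage_Ioi_zero_of_isCozeroSet (hO : IsObsAlg o) {U : Set Ω}
    (hU : IsCozeroSet o U) : ∃ w ∈ o, U = w ⁻¹' Ioi 0 := by
  obtain ⟨u, hu, hUu⟩ := hU
  refine ⟨_, hO.comp_mem_s7 hu continuous_abs, ?_⟩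
  rw [← compl_compl U, hUu]
  ext
  simp [abs_pos]

end IsObsAlg

theorem iUnion_preimage_Ioi_of_monotone_of_tendsto {ι : Type*} {Xs : ℕ → ι → ℝ} {X : ι → ℝ}
    (hmono : Monotone Xs) (hlim : ∀ i, Tendsto (fun n => Xs n i) atTop (𝓝 (X i))) (c : ℝ) :
    ⋃ n, Xs n ⁻¹' Ioi c = X ⁻¹' Ioi c := by
  ext i
  simp only [mem_iUnion, mem_preimage, mem_Ioi]
  refine ⟨fun ⟨n, hn⟩ => hn.trans_le ?_, fun h => ((hlim i).eventually (lt_mem_nhds h)).exists⟩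
  exact Monotone.ge_of_tendsto (f := fun n => Xs n i) (fun m n hmn => hmono hmn i) (hlim i) n

namespace IsObsProb

variable {o : Set (Ω → ℝ)} {P : Set Ω → ℝ} {Xs : ℕ → Ω → ℝ}

theorem apply_empty (hO : IsObsAlg o) (hP : IsObsProb o P) {f : Ω → ℝ} (hf : f ∈ o) :
    P ∅ = 0 := by
  have hE : IsObsSet o ∅ := Or.inl (hO.isZeroSet_empty hf)
  have h := hP.1 ∅ ∅ hE hE (disjoint_empty _) (by rwa [union_empty])
  rw [union_empty] at h
  linarith

theorem le_apply_union (hP : IsObsProb o P) {A B : Set Ω} (hA : IsObsSet o A)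
    (hB : IsObsSet o B) (hAB : Disjoint A B) (hAuB : IsObsSet o (A ∪ B)) :
    P A ≤ P (A ∪ B) := by
  rw [hP.1 A B hA hB hAB hAuB]
  linarith [hP.2.1 B hB]

theorem apply_le_of_isZeroSet_subset_isCozeroSet (hO : IsObsAlg o) (hP : IsObsProb o P)
    {F U : Set Ω} (hF : IsZeroSet o F) (hU : IsCozeroSet o U) (hFU : F ⊆ U) : P F ≤ P U := by
  have hUF : IsCozeroSet o (U \ F) := by
    rw [sdiff_eq]
    exact hO.isCozeroSet_inter hU (by rwa [IsCozeroSet, compl_compl])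
  have h := hP.le_apply_union (Or.inl hF) (Or.inr hUF) disjoint_sdiff_right
    (by rw [union_sdiff_cancel hFU]; exact Or.inr hU)
  rwa [union_sdiff_cancel hFU] at h

theorem apply_preimage_Ioi_le_Ici (hO : IsObsAlg o) (hP : IsObsProb o P) {f : Ω → ℝ}
    (hf : f ∈ o) (c : ℝ) : P (f ⁻¹' Ioi c) ≤ P (f ⁻¹' Ici c) := by
  have h := hP.le_apply_union (Or.inr (hO.isCozeroSet_preimage_Ioi hf c))
    (Or.inl (hO.isZeroSet_preimage_singleton hf c))
    ((disjoint_singleton_right.2 self_notMem_Ioi).preimage f)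
    (by rw [← preimage_union, Ioi_union_left]; exact Or.inl (hO.isZeroSet_preimage_Ici hf c))
  rwa [← preimage_union, Ioi_union_left] at h

/-- A co-zero set `{w > 0}` is exhausted by the co-zero sets `{w > 1/(m+1)}`, each contained in
the zero set `{w ≥ 1/(m+1)}`; axiom (IV) passes the comparison with `V` to the limit. -/
theorem apply_preimage_Ioi_zero_le (hO : IsObsAlg o) (hP : IsObsProb o P) {w : Ω → ℝ}
    (hw : w ∈ o) {V : Set Ω} (hV : IsCozeroSet o V) (hwV : w ⁻¹' Ioi 0 ⊆ V) :
    P (w ⁻¹' Ioi 0) ≤ P V := by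
  set ε : ℕ → ℝ := fun m => 1 / (m + 1)
  have hε_pos : ∀ m, 0 < ε m := fun m => Nat.one_div_pos_of_nat
  have hε_anti : Antitone ε := fun m n hmn => Nat.one_div_le_one_div hmn
  have hunion : ⋃ m, w ⁻¹' Ioi (ε m) = w ⁻¹' Ioi 0 := by
    rw [← preimage_iUnion, (isGLB_of_tendsto_atTop hε_anti
      tendsto_one_div_add_atTop_nhds_zero_nat).iUnion_Ioi_eq]
  have hlim := hP.2.2.2 _ _ (fun m => hO.isCozeroSet_preimage_Ioi hw (ε m))
    (fun m n hmn => preimage_mono (Ioi_subset_Ioi (hε_anti hmn)))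
    (hO.isCozeroSet_preimage_Ioi hw 0) hunion
  refine le_of_tendsto hlim (Eventually.of_forall fun m => ?_)
  calc P (w ⁻¹' Ioi (ε m)) ≤ P (w ⁻¹' Ici (ε m)) := hP.apply_preimage_Ioi_le_Ici hO hw _
    _ ≤ P V := hP.apply_le_of_isZeroSet_subset_isCozeroSet hO (hO.isZeroSet_preimage_Ici hw _)
        hV ((preimage_mono (Ici_subset_Ioi.2 (hε_pos m))).trans hwV)

theorem apply_mono_of_isCozeroSet (hO : IsObsAlg o) (hP : IsObsProb o P) {U V : Set Ω}
    (hU : IsCozeroSet o U) (hV : IsCozeroSet o V) (hUV : U ⊆ V) : P U ≤ P V := by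
  obtain ⟨w, hw, rfl⟩ := hO.exists_preimage_Ioi_zero_of_isCozeroSet hU
  exact hP.apply_preimage_Ioi_zero_le hO hw hV hUV

theorem monotone_apply_preimage_Ioi (hO : IsObsAlg o) (hP : IsObsProb o P)
    (hXs : ∀ n, Xs n ∈ o) (hmono : Monotone Xs) (c : ℝ) :
    Monotone fun n => P (Xs n ⁻¹' Ioi c) := fun m n hmn =>
  hP.apply_mono_of_isCozeroSet hO (hO.isCozeroSet_preimage_Ioi (hXs m) c)
    (hO.isCozeroSet_preimage_Ioi (hXs n) c) fun ω hω => lt_of_lt_of_le hω (hmono hmn ω)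

theorem tendsto_apply_preimage_Ioi (hO : IsObsAlg o) (hP : IsObsProb o P)
    (hXs : ∀ n, Xs n ∈ o) {X : Ω → ℝ} (hX : X ∈ o) (hmono : Monotone Xs)
    (hlim : ∀ ω, Tendsto (fun n => Xs n ω) atTop (𝓝 (X ω))) (c : ℝ) :
    Tendsto (fun n => P (Xs n ⁻¹' Ioi c)) atTop (𝓝 (P (X ⁻¹' Ioi c))) :=
  hP.2.2.2 _ _ (fun n => hO.isCozeroSet_preimage_Ioi (hXs n) c)
    (fun _ _ hmn ω hω => lt_of_lt_of_le hω (hmono hmn ω)) (hO.isCozeroSet_preimage_Ioi hX c)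
    (iUnion_preimage_Ioi_of_monotone_of_tendsto hmono hlim c)

end IsObsProb

namespace IsDistribution

variable {o : Set (Ω → ℝ)} {P : Set Ω → ℝ} {X : Ω → ℝ} {μ : Measure ℝ}

theorem apply_Ioi (hμ : IsDistribution o P X μ) (c : ℝ) :
    μ (Ioi c) = ENNReal.ofReal (P (X ⁻¹' Ioi c)) :=
  hμ.2 _ isOpen_Ioi

theorem apply_Iio_eq_zero (hμ : IsDistribution o P X μ) (hP : P ∅ = 0) {α : ℝ}
    (hX : ∀ ω, α ≤ X ω) : μ (Iio α) = 0 := by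
  have hempty : X ⁻¹' Iio α = ∅ := eq_empty_of_forall_notMem fun ω hω => (hX ω).not_gt hω
  rw [hμ.2 _ isOpen_Iio, hempty, hP, ENNReal.ofReal_zero]

end IsDistribution

section TailFormula

variable {ν : Measure ℝ} {α : ℝ}

theorem ae_le_of_measure_Iio_eq_zero (h : ν (Iio α) = 0) : ∀ᵐ t ∂ν, α ≤ t := by
  simpa using measure_eq_zero_iff_ae_notMem.1 h

theorem lintegral_ofReal_sub_eq_lintegral_measure_Ioi (h : ν (Iio α) = 0) :
    ∫⁻ t, ENNReal.ofReal (t - α) ∂ν = ∫⁻ s in Ioi 0, ν (Ioi (α + s)) := by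
  rw [lintegral_eq_lintegral_meas_lt ν ?_ (by fun_prop)]
  · simp_rw [lt_sub_iff_add_lt']
    rfl
  · filter_upwards [ae_le_of_measure_Iio_eq_zero h] with t ht
    exact sub_nonneg.2 ht

theorem integrable_id_iff_lintegral_measure_Ioi_ne_top [IsFiniteMeasure ν]
    (h : ν (Iio α) = 0) : Integrable id ν ↔ ∫⁻ s in Ioi 0, ν (Ioi (α + s)) ≠ ⊤ := by
  rw [← lintegral_ofReal_sub_eq_lintegral_measure_Ioi h, lintegral_ofReal_ne_top_iff_integrable
    (by fun_prop) ?_]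
  · exact ⟨fun h => h.sub (integrable_const α),
      fun h => (h.add (integrable_const α)).congr (ae_of_all _ fun t => sub_add_cancel t α)⟩
  · filter_upwards [ae_le_of_measure_Iio_eq_zero h] with t ht
    exact sub_nonneg.2 ht

theorem integral_id_eq_add_lintegral_measure_Ioi [IsProbabilityMeasure ν]
    (h : ν (Iio α) = 0) (hint : Integrable id ν) :
    ∫ t, t ∂ν = α + (∫⁻ s in Ioi 0, ν (Ioi (α + s))).toReal := by
  rw [← lintegral_ofReal_sub_eq_lintegral_measure_Ioi h, ← integral_eq_lintegral_of_nonneg_ae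
    ?_ (by fun_prop), integral_sub (f := fun t => t) hint (integrable_const α)]
  · simp
  · filter_upwards [ae_le_of_measure_Iio_eq_zero h] with t ht
    exact sub_nonneg.2 ht

end TailFormula

theorem tendsto_integral_id_of_monotone_measure_Ioi {ν : ℕ → Measure ℝ} {ν' : Measure ℝ}
    [∀ n, IsProbabilityMeasure (ν n)] [IsProbabilityMeasure ν'] {α : ℝ}
    (hν : ∀ n, ν n (Iio α) = 0) (hν' : ν' (Iio α) = 0)
    (hmono : ∀ c, Monotone fun n => ν n (Ioi c))
    (htend : ∀ c, Tendsto (fun n => ν n (Ioi c)) atTop (𝓝 (ν' (Ioi c))))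
    (hint : Integrable id ν') :
    (∀ n, Integrable id (ν n)) ∧ Monotone (fun n => ∫ t, t ∂(ν n)) ∧
      Tendsto (fun n => ∫ t, t ∂(ν n)) atTop (𝓝 (∫ t, t ∂ν')) := by
  set L : ℕ → ℝ≥0∞ := fun n => ∫⁻ s in Ioi 0, ν n (Ioi (α + s))
  set L' : ℝ≥0∞ := ∫⁻ s in Ioi 0, ν' (Ioi (α + s))
  have hL_mono : Monotone L := fun m n hmn => lintegral_mono fun s => hmono _ hmn
  have hL_tend : Tendsto L atTop (𝓝 L') := by
    refine lintegral_tendsto_of_tendsto_of_monotone (fun n => (Antitone.measurable ?_).aemeasurable)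
      (ae_of_all _ fun s => hmono _) (ae_of_all _ fun s => htend _)
    exact fun s t hst => measure_mono (Ioi_subset_Ioi (by linarith))
  have hL'_ne_top : L' ≠ ⊤ := (integrable_id_iff_lintegral_measure_Ioi_ne_top hν').1 hint
  have hL_ne_top (n : ℕ) : L n ≠ ⊤ :=
    ne_top_of_le_ne_top hL'_ne_top (hL_mono.ge_of_tendsto hL_tend n)
  have hint_n (n : ℕ) : Integrable id (ν n) :=
    (integrable_id_iff_lintegral_measure_Ioi_ne_top (hν n)).2 (hL_ne_top n)
  have hI (n : ℕ) : ∫ t, t ∂(ν n) = α + (L n).toReal :=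
    integral_id_eq_add_lintegral_measure_Ioi (hν n) (hint_n n)
  refine ⟨hint_n, fun m n hmn => ?_, ?_⟩
  · simp only [hI]
    gcongr
    exacts [hL_ne_top n, hL_mono hmn]
  · simp only [hI, integral_id_eq_add_lintegral_measure_Ioi hν' hint]
    exact tendsto_const_nhds.add ((ENNReal.tendsto_toReal hL'_ne_top).comp hL_tend)

theorem integral_monotone_convergence_general {Ω : Type*}
    (o : Set (Ω → ℝ)) (hO : IsObsAlg o) (P : Set Ω → ℝ) (hP : IsObsProb o P)
    (Xs : ℕ → Ω → ℝ) (X : Ω → ℝ) (hXs : ∀ n, Xs n ∈ o) (hX : X ∈ o)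
    (α : ℝ) (hα : ∀ ω, α ≤ Xs 0 ω)
    (hmono : ∀ n ω, Xs n ω ≤ Xs (n + 1) ω)
    (hlim : ∀ ω, Tendsto (fun n => Xs n ω) atTop (𝓝 (X ω)))
    (μs : ℕ → Measure ℝ) (μ : Measure ℝ)
    (hμs : ∀ n, IsDistribution o P (Xs n) (μs n)) (hμ : IsDistribution o P X μ)
    (hint : Integrable id μ) :
    (∀ n, Integrable id (μs n)) ∧
    Monotone (fun n => ∫ t, t ∂(μs n)) ∧
    Tendsto (fun n => ∫ t, t ∂(μs n)) atTop (𝓝 (∫ t, t ∂μ)) := by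
  have hXs_mono : Monotone Xs := monotone_nat_of_le_succ hmono
  have hP_empty : P ∅ = 0 := hP.apply_empty hO hX
  have hXs_ge (n : ℕ) (ω : Ω) : α ≤ Xs n ω := (hα ω).trans (hXs_mono n.zero_le ω)
  have hX_ge (ω : Ω) : α ≤ X ω := ge_of_tendsto (hlim ω) (Eventually.of_forall (hXs_ge · ω))
  have hμs_prob (n : ℕ) : IsProbabilityMeasure (μs n) := (hμs n).1
  have hμ_prob : IsProbabilityMeasure μ := hμ.1
  refine tendsto_integral_id_of_monotone_measure_Ioi
    (fun n => (hμs n).apply_Iio_eq_zero hP_empty (hXs_ge n)) (hμ.apply_Iio_eq_zero hP_empty hX_ge)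
    (fun c m n hmn => ?_) (fun c => ?_) hint
  · simp only [(hμs _).apply_Ioi]
    exact ENNReal.ofReal_le_ofReal (hP.monotone_apply_preimage_Ioi hO hXs hXs_mono c hmn)
  · simp only [(hμs _).apply_Ioi, hμ.apply_Ioi]
    exact ENNReal.tendsto_ofReal (hP.tendsto_apply_preimage_Ioi hO hXs hX hXs_mono hlim c)

/-- monotone convergence of the integral for observables bounded below. -/
theorem integral_monotone_convergence {Ω : Type*} [Nonempty Ω]
    (o : Set (Ω → ℝ)) (hO : IsObsAlg o) (P : Set Ω → ℝ) (hP : IsObsProb o P)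
    (Xs : ℕ → Ω → ℝ) (X : Ω → ℝ) (hXs : ∀ n, Xs n ∈ o) (hX : X ∈ o)
    (α : ℝ) (hα : ∀ ω, α ≤ Xs 0 ω)
    (hmono : ∀ n ω, Xs n ω ≤ Xs (n + 1) ω)
    (hlim : ∀ ω, Tendsto (fun n => Xs n ω) atTop (𝓝 (X ω)))
    (μs : ℕ → Measure ℝ) (μ : Measure ℝ)
    (hμs : ∀ n, IsDistribution o P (Xs n) (μs n)) (hμ : IsDistribution o P X μ)
    (hint : Integrable id μ) :
    (∀ n, Integrable id (μs n)) ∧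
    Monotone (fun n => ∫ t, t ∂(μs n)) ∧
    Tendsto (fun n => ∫ t, t ∂(μs n)) atTop (𝓝 (∫ t, t ∂μ)) :=
  integral_monotone_convergence_general o hO P hP Xs X hXs hX α hα hmono hlim μs μ hμs hμ hint
end

section
/- (Urysohn Lemma for zero sets) Let 𝒪 be an algebra of observables on a nonempty set Ω. If F is a zero set, U is a co-zero set, and F ⊆ U, then there exists X ∈ 𝒪 such that 1_F ≤ X pointwise and X ⪯ U, i.e. there is a zero set G with X ≤ 1_G pointwise and G ⊆ U. -/
open Filter MeasureTheory Topology

variable {Ω : Type*}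

/-- Urysohn Lemma for zero sets. -/
theorem urysohn_zeroSet {Ω : Type*} [Nonempty Ω]
    (o : Set (Ω → ℝ)) (hO : IsObsAlg o)
    (F U : Set Ω) (hF : IsZeroSet o F) (hU : IsCozeroSet o U) (hFU : F ⊆ U) :
    ∃ X ∈ o, (∀ ω, F.indicator (fun _ => (1:ℝ)) ω ≤ X ω) ∧ PrecU o X U := by
  obtain ⟨f, hf, hFe⟩ := hF
  obtain ⟨g, hg, hUe⟩ := hU
  have hgF : ∀ ω ∈ F, g ω ≠ 0 := by
    intro ω hωF hg0
    have : ω ∈ Uᶜ := by rw [hUe]; exact hg0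
    exact this (hFU hωF)
  have hD : ∀ ω, 0 < f ω ^ 2 + g ω ^ 2 := by
    intro ω
    rcases eq_or_ne (f ω) 0 with h0 | h0
    · have hωF : ω ∈ F := by rw [hFe]; exact h0
      have hg0 := hgF ω hωF
      positivity
    · positivity
  set t : Ω → ℝ := fun ω => g ω ^ 2 / (f ω ^ 2 + g ω ^ 2) with ht
  have key : ∀ ψ : ℝ → ℝ, Continuous ψ → (fun ω => ψ (t ω)) ∈ o := by
    intro ψ hψ
    have hmem : ∀ i, (![f, g] : Fin 2 → Ω → ℝ) i ∈ o := by
      intro i; fin_cases i <;> simpa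
    have := hO 2 (by norm_num) ![f, g] hmem
      (fun v => ψ ((v 1) ^ 2 / ((v 0) ^ 2 + (v 1) ^ 2))) ?_
    · exact this
    · apply hψ.comp_continuousOn
      apply ContinuousOn.div
      · fun_prop
      · fun_prop
      · rintro v ⟨ω, rfl⟩
        simpa using (hD ω).ne'
  have ht0 : ∀ ω, 0 ≤ t ω := by
    intro ω; have := hD ω; positivity
  have ht1 : ∀ ω, t ω ≤ 1 := by
    intro ω
    rw [ht]
    rw [div_le_one (hD ω)]
    nlinarith [sq_nonneg (f ω)]
  have htF : ∀ ω ∈ F, t ω = 1 := by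
    intro ω hωF
    have hf0 : f ω = 0 := by rw [hFe] at hωF; exact hωF
    have hg0 := hgF ω hωF
    have hD' : f ω ^ 2 + g ω ^ 2 = g ω ^ 2 := by rw [hf0]; ring
    show g ω ^ 2 / (f ω ^ 2 + g ω ^ 2) = 1
    rw [hD', div_self (pow_ne_zero 2 hg0)]
  refine ⟨fun ω => max 0 (2 * t ω - 1),
    key (fun s => max 0 (2 * s - 1)) (by fun_prop), ?_, ?_⟩
  · intro ω
    show F.indicator (fun _ => (1:ℝ)) ω ≤ max 0 (2 * t ω - 1)
    rcases em (ω ∈ F) with hωF | hωF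
    · rw [Set.indicator_of_mem hωF]
      have h1 := htF ω hωF
      rw [h1]
      norm_num
    · rw [Set.indicator_of_notMem hωF]
      exact le_max_left _ _
  · refine ⟨(fun ω => min (t ω - 1/2) 0) ⁻¹' {0},
      ⟨_, key (fun s => min (s - 1/2) 0) (by fun_prop), rfl⟩, ?_, ?_⟩
    · intro ω
      show max 0 (2 * t ω - 1) ≤ _
      rcases em (ω ∈ (fun ω => min (t ω - 1/2) 0) ⁻¹' {0}) with hG | hG
      · rw [Set.indicator_of_mem hG]
        have := ht1 ω
        simp only [max_le_iff]
        constructor <;> linarith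
      · rw [Set.indicator_of_notMem hG]
        have hG' : min (t ω - 1/2) 0 ≠ 0 := hG
        have hlt : t ω < 1/2 := by
          by_contra hge
          exact hG' (min_eq_right (by linarith [not_lt.mp hge]))
        simp only [max_le_iff]
        constructor <;> linarith
    · intro ω hωG
      have hG' : min (t ω - 1/2) 0 = 0 := hωG
      by_contra hωU
      have hg0 : g ω = 0 := by
        have : ω ∈ Uᶜ := hωU
        rw [hUe] at this; exact this
      have ht00 : t ω = 0 := by
        show g ω ^ 2 / (f ω ^ 2 + g ω ^ 2) = 0
        rw [hg0]; simp
      rw [ht00] at hG'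
      norm_num at hG'
end

section
/- Let 𝒪 be an algebra of observables on a nonempty set Ω and let E : 𝒪^∞ → ℝ be positive (X ≥ 0 pointwise implies E[X] ≥ 0) and quasi-linear (linear on each 𝒜_X, X ∈ 𝒪^∞). For every co-zero set U: sup{E[X] : X ∈ 𝒪^∞, X ≤ 1_U pointwise} = sup{E[X] : X ∈ 𝒪^∞, X ⪯ U}. -/
open Filter MeasureTheory Topology

variable {Ω : Type*}

lemma comp_mem_obsAlg {Ω : Type*} {o : Set (Ω → ℝ)} (hO : IsObsAlg o)
    {X : Ω → ℝ} (hX : X ∈ o) {φ : ℝ → ℝ} (hφ : Continuous φ) :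
    (fun ω => φ (X ω)) ∈ o := by
  have := hO 1 one_pos (fun _ => X) (fun _ => hX) (fun v => φ (v 0))
    ((hφ.comp (continuous_apply 0)).continuousOn)
  simpa using this

/-- for a positive quasi-linear functional,
`sup {E X : X ≤ 1_U} = sup {E X : X ⪯ U}`. -/
theorem sup_le_indicator_eq_sup_prec {Ω : Type*} [Nonempty Ω]
    (o : Set (Ω → ℝ)) (hO : IsObsAlg o) (E : (Ω → ℝ) → ℝ)
    (hpos : PositiveFunc o E) (hql : QuasiLinear o E)
    (U : Set Ω) (hU : IsCozeroSet o U) :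
    sSup {r | ∃ X : Ω → ℝ, MemBdd o X ∧
        (∀ ω, X ω ≤ U.indicator (fun _ => (1:ℝ)) ω) ∧ r = E X} =
    sSup {r | ∃ X : Ω → ℝ, MemBdd o X ∧ PrecU o X U ∧ r = E X} := by
  obtain ⟨Z, hZ, hZeq⟩ := hU
  set A := {r | ∃ X : Ω → ℝ, MemBdd o X ∧
      (∀ ω, X ω ≤ U.indicator (fun _ => (1:ℝ)) ω) ∧ r = E X} with hAdef
  set B := {r | ∃ X : Ω → ℝ, MemBdd o X ∧ PrecU o X U ∧ r = E X} with hBdef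
  have hone : (fun _ : Ω => (1:ℝ)) ∈ o := comp_mem_obsAlg hO hZ continuous_const
  have honeBdd : MemBdd o (fun _ : Ω => (1:ℝ)) := ⟨hone, 1, by simp⟩
  have hzero : (fun _ : Ω => (0:ℝ)) ∈ o := comp_mem_obsAlg hO hZ continuous_const
  have hzeroBdd : MemBdd o (fun _ : Ω => (0:ℝ)) := ⟨hzero, 0, by simp⟩
  have hE1 : 0 ≤ E (fun _ => (1:ℝ)) := hpos _ honeBdd (fun _ => zero_le_one)
  -- B ⊆ A
  have hBA : B ⊆ A := by
    rintro r ⟨X, hX, ⟨F, hF, hXF, hFU⟩, rfl⟩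
    refine ⟨X, hX, fun ω => (hXF ω).trans ?_, rfl⟩
    exact Set.indicator_le_indicator_of_subset hFU (fun _ => zero_le_one) ω
  -- A and B are nonempty
  have hAne : A.Nonempty := by
    refine ⟨E (fun _ => 0), (fun _ => 0), hzeroBdd, fun ω => ?_, rfl⟩
    exact Set.indicator_nonneg (fun _ _ => zero_le_one) ω
  have hBne : B.Nonempty := by
    refine ⟨E (fun _ => 0), (fun _ => 0), hzeroBdd, ⟨∅, ⟨(fun _ => 1), hone, ?_⟩,
      fun ω => Set.indicator_nonneg (fun _ _ => zero_le_one) ω, Set.empty_subset U⟩, rfl⟩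
    ext ω; simp
  -- indicator bounded by 1
  have hind1 : ∀ ω, U.indicator (fun _ => (1:ℝ)) ω ≤ 1 := fun ω =>
    Set.indicator_le_self' (fun _ _ => zero_le_one) ω |>.trans (le_refl _) |>.trans_eq rfl
      |>.trans (by by_cases h : ω ∈ U <;> simp [Set.indicator, h])
  -- A bounded above by E 1
  have hAbd : BddAbove A := by
    refine ⟨E (fun _ => (1:ℝ)), ?_⟩
    rintro r ⟨X, hX, hXle, rfl⟩
    obtain ⟨hXo, M, hM⟩ := hX
    have hXle1 : ∀ ω, X ω ≤ 1 := fun ω => (hXle ω).trans (hind1 ω)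
    have key := hql X ⟨hXo, M, hM⟩ (fun _ => (1:ℝ)) ⟨fun _ => 1, continuous_const, rfl⟩
      X ⟨id, continuous_id, rfl⟩ 1 (-1)
    have hfn : (fun ω => 1 * (fun _ : Ω => (1:ℝ)) ω + (-1) * X ω)
        = fun ω => 1 - X ω := by funext ω; ring
    rw [hfn] at key
    have hmem : MemBdd o (fun ω => 1 - X ω) :=
      ⟨comp_mem_obsAlg hO hXo (continuous_const.sub continuous_id),
        M + 1, fun ω => by
          have h := abs_le.mp (hM ω); rw [abs_le]
          refine ⟨?_, ?_⟩ <;> dsimp only <;> linarith [h.1, h.2]⟩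
    have hposval : 0 ≤ E (fun ω => 1 - X ω) :=
      hpos _ hmem (fun ω => by linarith [hXle1 ω])
    linarith [key ▸ hposval]
  have hBbd : BddAbove B := hAbd.mono hBA
  refine le_antisymm ?_ (csSup_le_csSup hAbd hBne hBA)
  refine csSup_le hAne ?_
  rintro r ⟨X, hX, hXle, rfl⟩
  obtain ⟨hXo, M, hM⟩ := hX
  have hXle1 : ∀ ω, X ω ≤ 1 := fun ω => (hXle ω).trans (hind1 ω)
  -- for each δ > 0, E X - δ * E 1 ∈ B (via X - δ)
  have hkey : ∀ δ : ℝ, 0 < δ → E X - δ * E (fun _ => (1:ℝ)) ≤ sSup B := by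
    intro δ hδ
    have hYo : (fun ω => X ω - δ) ∈ o :=
      comp_mem_obsAlg hO hXo (continuous_id.sub continuous_const)
    have hYbdd : MemBdd o (fun ω => X ω - δ) :=
      ⟨hYo, M + δ, fun ω => by
        have h := abs_le.mp (hM ω); rw [abs_le]
        refine ⟨?_, ?_⟩ <;> dsimp only <;> linarith [h.1, h.2]⟩
    -- the zero set F = {ω | δ ≤ X ω}
    have hGo : (fun ω => max (δ - X ω) 0) ∈ o :=
      comp_mem_obsAlg hO hXo ((continuous_const.sub continuous_id).max continuous_const)
    set F : Set Ω := {ω | δ ≤ X ω} with hFdef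
    have hFzero : IsZeroSet o F := by
      refine ⟨(fun ω => max (δ - X ω) 0), hGo, ?_⟩
      ext ω
      simp only [hFdef, Set.mem_setOf_eq, Set.mem_preimage, Set.mem_singleton_iff,
        max_eq_right_iff]
      constructor
      · intro h; linarith
      · intro h; linarith
    have hFU : F ⊆ U := by
      intro ω hω
      by_contra hωU
      have h0 : U.indicator (fun _ => (1:ℝ)) ω = 0 := Set.indicator_of_notMem hωU _
      have h1 := hXle ω
      rw [h0] at h1
      have h2 : δ ≤ X ω := hω
      linarith
    have hprec : PrecU o (fun ω => X ω - δ) U := by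
      refine ⟨F, hFzero, fun ω => ?_, hFU⟩
      by_cases h : ω ∈ F
      · rw [Set.indicator_of_mem h]
        have := hXle1 ω; dsimp only; linarith
      · rw [Set.indicator_of_notMem h]
        simp only [hFdef, Set.mem_setOf_eq, not_le] at h
        dsimp only; linarith
    have hmemB : E (fun ω => X ω - δ) ∈ B := ⟨(fun ω => X ω - δ), hYbdd, hprec, rfl⟩
    have key := hql X ⟨hXo, M, hM⟩ X ⟨id, continuous_id, rfl⟩
      (fun _ => (1:ℝ)) ⟨fun _ => 1, continuous_const, rfl⟩ 1 (-δ)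
    have hfn : (fun ω => 1 * X ω + (-δ) * (fun _ : Ω => (1:ℝ)) ω)
        = fun ω => X ω - δ := by funext ω; ring
    rw [hfn] at key
    have : E (fun ω => X ω - δ) = E X - δ * E (fun _ => (1:ℝ)) := by rw [key]; ring
    exact this ▸ le_csSup hBbd hmemB
  -- conclude E X ≤ sSup B
  refine le_of_forall_pos_le_add fun ε hε => ?_
  have hδ : 0 < ε / (E (fun _ => (1:ℝ)) + 1) := div_pos hε (by linarith)
  have h1 := hkey _ hδ
  have h2 : (ε / (E (fun _ => (1:ℝ)) + 1)) * E (fun _ => (1:ℝ)) ≤ ε := by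
    rw [div_mul_eq_mul_div, div_le_iff₀ (by linarith)]
    nlinarith
  linarith
end
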